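/- arXiv:2511.22252 — 4 statements merged into one kernel-verified Lean document; each statement's English description precedes it below -/
import Mathlib

section
/- Let κIL, κLR, κQU, α, β > 0 with α ≤ β, and let a₁, a₂ > 0 satisfy β·a₂ < α·a₁. Define F(x₁,x₂) = a₁x₁ + a₂x₂ on ℕ². Then there exist ε > 0 and C < ∞ such that the generator Ω of the Markov chain with transitions x → x+e₁ at rate κIL, x → x+e₂−e₁ at rate κLR·α·x₁, x → x+e₂ at rate κLR·(β−α)·x₁, x → x−e₂ at rate κQU·x₂ satisfies Ω(F)(x) ≤ −ε·(x₁ + x₂) + C for all x ∈ ℕ². -/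
/-- Lyapunov drift condition for the fast chain of Proposition 3.1:
with `F(x₁,x₂) = a₁x₁ + a₂x₂` and `β·a₂ < α·a₁`, the generator satisfies
`Ω(F)(x) ≤ −ε·(x₁+x₂) + C`. -/
theorem stmt5 (κIL κLR κQU α β a₁ a₂ : ℝ) (hκIL : 0 < κIL) (hκLR : 0 < κLR)
    (hκQU : 0 < κQU) (hα : 0 < α) (hβ : 0 < β) (hαβ : α ≤ β)
    (ha₁ : 0 < a₁) (ha₂ : 0 < a₂) (hab : β * a₂ < α * a₁)
    (F : ℕ × ℕ → ℝ) (hF : ∀ x : ℕ × ℕ, F x = a₁ * x.1 + a₂ * x.2) :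
    ∃ ε > (0 : ℝ), ∃ C : ℝ, ∀ x : ℕ × ℕ,
      κIL * (F (x.1 + 1, x.2) - F x)
        + κLR * α * x.1 * (F (x.1 - 1, x.2 + 1) - F x)
        + κLR * (β - α) * x.1 * (F (x.1, x.2 + 1) - F x)
        + κQU * x.2 * (F (x.1, x.2 - 1) - F x)
      ≤ -ε * (x.1 + x.2) + C := by
  refine ⟨min (κLR * (α * a₁ - β * a₂)) (κQU * a₂), ?_, κIL * a₁, ?_⟩
  · exact lt_min (by nlinarith) (by positivity)
  · rintro ⟨m, n⟩
    have h1 : min (κLR * (α * a₁ - β * a₂)) (κQU * a₂) ≤ κLR * (α * a₁ - β * a₂) :=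
      min_le_left _ _
    have h2 : min (κLR * (α * a₁ - β * a₂)) (κQU * a₂) ≤ κQU * a₂ := min_le_right _ _
    match m, n with
    | 0, 0 => simp only [hF]; push_cast; nlinarith
    | 0, n + 1 => simp only [hF]; push_cast; nlinarith [Nat.cast_nonneg (α := ℝ) n]
    | m + 1, 0 => simp only [hF]; push_cast; nlinarith [Nat.cast_nonneg (α := ℝ) m]
    | m + 1, n + 1 =>
      simp only [hF, Nat.add_sub_cancel]; push_cast
      nlinarith [Nat.cast_nonneg (α := ℝ) m, Nat.cast_nonneg (α := ℝ) n]
end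

section
/- Let λ, μR, μL, μU > 0. Let X, Y₁, Y₂, Z be independent Poisson random variables with parameters λ/(μR+μU), λμU/(μR(μR+μU)), λμR/(μU(μR+μU)), λ/μL respectively. Then the distribution of (X+Y₁, Z, X+Y₂) on ℕ³ is invariant for the continuous-time Markov chain on ℕ³ with transitions x → x + e_R + e_U − e_L at rate μL·x_L, x → x − e_R at rate μR·x_R, x → x − e_U at rate μU·x_U, and x → x + e_L at rate λ. -/
/-!
The law factorises as `F(r, u) · p(l)`, with `p` the Poisson(λ/μL) weights and `F` the bivariate
Poisson law of `(X + Y₁, X + Y₂)`. Since `μL (l + 1) p(l + 1) = λ p(l)`, the transitions moving the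
`L`-coordinate reduce global balance to the balance equation of the chain on `(r, u)` that jumps by
`(1, 1)` at rate `λ` and loses single customers at rates `μR r` and `μU u`. The Poisson identity
`k p_a(k) = a p_a(k - 1)`, applied to each summand of `F`, gives `r F(r, u) = a F(r-1, u-1) + b F(r-1, u)`
and its mirror image; after substituting them, each shifted value of `F` carries a coefficient that
vanishes for the given parameters.
-/

open Real

/-- The Poisson distribution with parameter `a`. -/
noncomputable def poissonP (a : ℝ) (x : ℕ) : ℝ := exp (-a) * a ^ x / (Nat.factorial x)

/-- Law of `(X+Y₁, Z, X+Y₂)` where `X, Y₁, Y₂, Z` are independent Poisson with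
parameters `a, b, c, d`: coordinates `(r, l, u)`. -/
noncomputable def invDist (a b c d : ℝ) (x : ℕ × ℕ × ℕ) : ℝ :=
  (∑' k : ℕ, if k ≤ x.1 ∧ k ≤ x.2.2 then
      poissonP a k * poissonP b (x.1 - k) * poissonP c (x.2.2 - k) else 0)
    * poissonP d x.2.1

open Finset

lemma succ_mul_poissonP_succ (a : ℝ) (n : ℕ) :
    ((n : ℝ) + 1) * poissonP a (n + 1) = a * poissonP a n := by
  simp only [poissonP, Nat.factorial_succ, pow_succ, Nat.cast_mul, Nat.cast_succ]
  field_simp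

-- `p = (X, Y₁)`, and then `Y₂ = u - p.1`.
noncomputable def bivariatePoisson (a b c : ℝ) (r u : ℕ) : ℝ :=
  ∑ p ∈ antidiagonal r,
    if p.1 ≤ u then poissonP a p.1 * poissonP b p.2 * poissonP c (u - p.1) else 0

lemma bivariatePoisson_eq_tsum (a b c : ℝ) (r u : ℕ) :
    bivariatePoisson a b c r u = ∑' k : ℕ, if k ≤ r ∧ k ≤ u then
      poissonP a k * poissonP b (r - k) * poissonP c (u - k) else 0 := by
  rw [tsum_eq_sum (s := range (r + 1)) fun k hk => if_neg fun h => hk (by simpa using h.1),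
    bivariatePoisson, Nat.sum_antidiagonal_eq_sum_range_succ_mk]
  refine sum_congr rfl fun k hk => ?_
  simp [Nat.lt_succ_iff.mp (mem_range.mp hk)]

lemma bivariatePoisson_comm (a b c : ℝ) (r u : ℕ) :
    bivariatePoisson a b c r u = bivariatePoisson a c b u r := by
  simp only [bivariatePoisson_eq_tsum, and_comm (a := _ ≤ r), mul_right_comm _ (poissonP b _)]

lemma invDist_eq_bivariatePoisson_mul (a b c d : ℝ) (x : ℕ × ℕ × ℕ) :
    invDist a b c d x = bivariatePoisson a b c x.1 x.2.2 * poissonP d x.2.1 := by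
  rw [invDist, bivariatePoisson_eq_tsum]

lemma succ_mul_bivariatePoisson_succ_left (a b c : ℝ) (r u : ℕ) :
    ((r : ℝ) + 1) * bivariatePoisson a b c (r + 1) u
      = a * (if u = 0 then 0 else bivariatePoisson a b c r (u - 1))
        + b * bivariatePoisson a b c r u := by
  set t : ℕ × ℕ → ℝ := fun p =>
    if p.1 ≤ u then poissonP a p.1 * poissonP b p.2 * poissonP c (u - p.1) else 0
  have split : ((r : ℝ) + 1) * ∑ p ∈ antidiagonal (r + 1), t p
      = ∑ p ∈ antidiagonal (r + 1), (p.1 : ℝ) * t p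
        + ∑ p ∈ antidiagonal (r + 1), (p.2 : ℝ) * t p := by
    rw [mul_sum, ← sum_add_distrib]
    refine sum_congr rfl fun p hp => ?_
    rw [← add_mul, ← Nat.cast_add, mem_antidiagonal.mp hp, Nat.cast_succ]
  have first : ∑ p ∈ antidiagonal (r + 1), (p.1 : ℝ) * t p
      = a * (if u = 0 then 0 else bivariatePoisson a b c r (u - 1)) := by
    rw [Nat.sum_antidiagonal_succ]
    rcases u with _ | v
    · simp [t]
    · rw [if_neg v.succ_ne_zero, Nat.add_sub_cancel, bivariatePoisson, mul_sum]
      simp only [Nat.cast_zero, zero_mul, zero_add, Nat.cast_succ]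
      refine sum_congr rfl fun p _ => ?_
      simp only [t, Nat.add_le_add_iff_right, Nat.add_sub_add_right]
      split_ifs
      · linear_combination (poissonP b p.2 * poissonP c (v - p.1)) * succ_mul_poissonP_succ a p.1
      · simp
  have second : ∑ p ∈ antidiagonal (r + 1), (p.2 : ℝ) * t p = b * bivariatePoisson a b c r u := by
    rw [Nat.sum_antidiagonal_succ', bivariatePoisson, mul_sum]
    simp only [Nat.cast_zero, zero_mul, zero_add, Nat.cast_succ]
    refine sum_congr rfl fun p _ => ?_
    simp only [t]
    split_ifs
    · linear_combination (poissonP a p.1 * poissonP c (u - p.1)) * succ_mul_poissonP_succ b p.2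
    · simp
  rw [bivariatePoisson, split, first, second]

lemma succ_mul_bivariatePoisson_succ_right (a b c : ℝ) (r u : ℕ) :
    ((u : ℝ) + 1) * bivariatePoisson a b c r (u + 1)
      = a * (if r = 0 then 0 else bivariatePoisson a b c (r - 1) u)
        + c * bivariatePoisson a b c r u := by
  simp only [bivariatePoisson_comm a b c, succ_mul_bivariatePoisson_succ_left]

lemma mul_bivariatePoisson_left (a b c : ℝ) (r u : ℕ) :
    (r : ℝ) * bivariatePoisson a b c r u
      = a * (if r = 0 ∨ u = 0 then 0 else bivariatePoisson a b c (r - 1) (u - 1))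
        + b * (if r = 0 then 0 else bivariatePoisson a b c (r - 1) u) := by
  rcases r with _ | s
  · simp
  · simpa using succ_mul_bivariatePoisson_succ_left a b c s u

lemma mul_bivariatePoisson_right (a b c : ℝ) (r u : ℕ) :
    (u : ℝ) * bivariatePoisson a b c r u
      = a * (if r = 0 ∨ u = 0 then 0 else bivariatePoisson a b c (r - 1) (u - 1))
        + c * (if u = 0 then 0 else bivariatePoisson a b c r (u - 1)) := by
  simp only [bivariatePoisson_comm a b c, mul_bivariatePoisson_left, or_comm]

lemma bivariatePoisson_balance {lam μR μU a b c : ℝ} (ha : (μR + μU) * a = lam)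
    (hb : μR * b = μU * a) (hc : μU * c = μR * a) (r u : ℕ) :
    lam * (if r = 0 ∨ u = 0 then 0 else bivariatePoisson a b c (r - 1) (u - 1))
      + μR * (r + 1) * bivariatePoisson a b c (r + 1) u
      + μU * (u + 1) * bivariatePoisson a b c r (u + 1)
      = (μR * r + μU * u + lam) * bivariatePoisson a b c r u := by
  linear_combination μR * succ_mul_bivariatePoisson_succ_left a b c r u
    + μU * succ_mul_bivariatePoisson_succ_right a b c r u
    - μR * mul_bivariatePoisson_left a b c r u
    - μU * mul_bivariatePoisson_right a b c r u
    + (bivariatePoisson a b c r u - (if r = 0 then 0 else bivariatePoisson a b c (r - 1) u)) * hb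
    + (bivariatePoisson a b c r u - (if u = 0 then 0 else bivariatePoisson a b c r (u - 1))) * hc
    - ((if r = 0 ∨ u = 0 then 0 else bivariatePoisson a b c (r - 1) (u - 1))
      - bivariatePoisson a b c r u) * ha

theorem stmt7_general (lam μR μL μU : ℝ) (hμR : 0 < μR)
    (hμL : 0 < μL) (hμU : 0 < μU) (y : ℕ × ℕ × ℕ) :
    (if y.1 = 0 ∨ y.2.2 = 0 then 0 else
        μL * (y.2.1 + 1) * invDist (lam / (μR + μU)) (lam * μU / (μR * (μR + μU)))
          (lam * μR / (μU * (μR + μU))) (lam / μL) (y.1 - 1, y.2.1 + 1, y.2.2 - 1))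
    + μR * (y.1 + 1) * invDist (lam / (μR + μU)) (lam * μU / (μR * (μR + μU)))
          (lam * μR / (μU * (μR + μU))) (lam / μL) (y.1 + 1, y.2.1, y.2.2)
    + μU * (y.2.2 + 1) * invDist (lam / (μR + μU)) (lam * μU / (μR * (μR + μU)))
          (lam * μR / (μU * (μR + μU))) (lam / μL) (y.1, y.2.1, y.2.2 + 1)
    + (if y.2.1 = 0 then 0 else
        lam * invDist (lam / (μR + μU)) (lam * μU / (μR * (μR + μU)))
          (lam * μR / (μU * (μR + μU))) (lam / μL) (y.1, y.2.1 - 1, y.2.2))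
    = (μL * y.2.1 + μR * y.1 + μU * y.2.2 + lam)
        * invDist (lam / (μR + μU)) (lam * μU / (μR * (μR + μU)))
          (lam * μR / (μU * (μR + μU))) (lam / μL) y := by
  obtain ⟨r, l, u⟩ := y
  simp only [invDist_eq_bivariatePoisson_mul]
  have balance := bivariatePoisson_balance (lam := lam) (μR := μR) (μU := μU)
    (a := lam / (μR + μU)) (b := lam * μU / (μR * (μR + μU))) (c := lam * μR / (μU * (μR + μU)))
    (by field_simp) (by field_simp) (by field_simp) r u
  have hd : μL * (lam / μL) = lam := by field_simp
  set F := bivariatePoisson (lam / (μR + μU)) (lam * μU / (μR * (μR + μU)))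
    (lam * μR / (μU * (μR + μU)))
  set d := lam / μL
  set p := poissonP d
  have arrival : (if r = 0 ∨ u = 0 then 0 else μL * (l + 1) * (F (r - 1) (u - 1) * p (l + 1)))
      = lam * (if r = 0 ∨ u = 0 then 0 else F (r - 1) (u - 1)) * p l := by
    split_ifs
    · simp
    · linear_combination μL * F (r - 1) (u - 1) * succ_mul_poissonP_succ d l
        + F (r - 1) (u - 1) * p l * hd
  have departure : (if l = 0 then 0 else lam * (F r u * p (l - 1))) = μL * l * (F r u * p l) := by
    rcases l with _ | m
    · simp
    · rw [if_neg m.succ_ne_zero, Nat.add_sub_cancel, Nat.cast_succ]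
      linear_combination -μL * F r u * succ_mul_poissonP_succ d m - F r u * p m * hd
  rw [arrival, departure]
  linear_combination p l * balance

/-- Proposition 3.3: the distribution of `(X+Y₁, Z, X+Y₂)`, with `X, Y₁, Y₂, Z`
independent Poisson of parameters `λ/(μR+μU)`, `λμU/(μR(μR+μU))`,
`λμR/(μU(μR+μU))`, `λ/μL`, is invariant for the chain on `ℕ³` with transitions
`x → x + e_R + e_U − e_L` at rate `μL·x_L`, `x → x − e_R` at rate `μR·x_R`,
`x → x − e_U` at rate `μU·x_U`, `x → x + e_L` at rate `λ`
(global balance at every state `y = (r, l, u)`). -/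
theorem stmt7 (lam μR μL μU : ℝ) (hlam : 0 < lam) (hμR : 0 < μR)
    (hμL : 0 < μL) (hμU : 0 < μU) (y : ℕ × ℕ × ℕ) :
    (if y.1 = 0 ∨ y.2.2 = 0 then 0 else
        μL * (y.2.1 + 1) * invDist (lam / (μR + μU)) (lam * μU / (μR * (μR + μU)))
          (lam * μR / (μU * (μR + μU))) (lam / μL) (y.1 - 1, y.2.1 + 1, y.2.2 - 1))
    + μR * (y.1 + 1) * invDist (lam / (μR + μU)) (lam * μU / (μR * (μR + μU)))
          (lam * μR / (μU * (μR + μU))) (lam / μL) (y.1 + 1, y.2.1, y.2.2)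
    + μU * (y.2.2 + 1) * invDist (lam / (μR + μU)) (lam * μU / (μR * (μR + μU)))
          (lam * μR / (μU * (μR + μU))) (lam / μL) (y.1, y.2.1, y.2.2 + 1)
    + (if y.2.1 = 0 then 0 else
        lam * invDist (lam / (μR + μU)) (lam * μU / (μR * (μR + μU)))
          (lam * μR / (μU * (μR + μU))) (lam / μL) (y.1, y.2.1 - 1, y.2.2))
    = (μL * y.2.1 + μR * y.1 + μU * y.2.2 + lam)
        * invDist (lam / (μR + μU)) (lam * μU / (μR * (μR + μU)))
          (lam * μR / (μU * (μR + μU))) (lam / μL) y :=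
  stmt7_general lam μR μL μU hμR hμL hμU y
end

section
/- Let κ0Q, κIL, κSR, κRS, κRI, C_M, C_U > 0 with κ0Q < κIL and C_M > 1. Define s∞ = 1 − κ0Q/κIL and u∞ = (κSR/κRS)·(κRI/κ0Q)·(C_M − κ0Q/κIL)·(1 − κ0Q/κIL). If u∞ < C_U, then (s∞, u∞) ∈ (0,1) × (0, C_U) and (s∞, u∞) is the unique point in (0,1) × (0, C_U) at which both right-hand sides of the system ṡ = κRS·u·(κIL(1−s) + κSR·s)/(κRI(C_M − (1−s)) + κRS·u) − κSR·s and u̇ = κIL(1−s) − κ0Q vanish. -/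
open Set

/-!
The equation `u̇ = 0` is linear in `s` alone and forces `s = 1 - κ0Q/κIL`. Substituting the
resulting inflow `κIL (1 - s) = κ0Q` into `ṡ = 0` and clearing the (positive) denominator, the
terms `κSR s κRS u` cancel and what remains is linear in `u`, namely
`κRS κ0Q u = κSR κRI s (C_M - (1 - s))`; this determines `u = u∞`.
-/

noncomputable section

namespace Sequestration

def sRhs (κIL κSR κRS κRI C_M s u : ℝ) : ℝ :=
  κRS * u * ((κIL * (1 - s) + κSR * s) / (κRI * (C_M - (1 - s)) + κRS * u)) - κSR * s

def uRhs (κ0Q κIL s : ℝ) : ℝ :=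
  κIL * (1 - s) - κ0Q

variable {κ0Q κIL κSR κRS κRI C_M s u : ℝ}

theorem uRhs_eq_zero_iff (hκIL : κIL ≠ 0) : uRhs κ0Q κIL s = 0 ↔ s = 1 - κ0Q / κIL := by
  rw [uRhs, sub_eq_zero, eq_sub_iff_add_eq, ← eq_sub_iff_add_eq', div_eq_iff hκIL]
  constructor <;> intro h <;> linarith

theorem sRhs_denom_pos (hκRI : 0 < κRI) (hκRS : 0 ≤ κRS) (hCM : 1 - s < C_M) (hu : 0 ≤ u) :
    0 < κRI * (C_M - (1 - s)) + κRS * u := by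
  have := sub_pos.2 hCM
  positivity

theorem sRhs_eq_zero_iff_of_uRhs_eq_zero (hκ0Q : κ0Q ≠ 0) (hκRS : κRS ≠ 0)
    (hD : κRI * (C_M - (1 - s)) + κRS * u ≠ 0) (hU : uRhs κ0Q κIL s = 0) :
    sRhs κIL κSR κRS κRI C_M s u = 0 ↔ u = κSR / κRS * (κRI / κ0Q) * (C_M - (1 - s)) * s := by
  have hinflow : κIL * (1 - s) = κ0Q := sub_eq_zero.1 hU
  rw [sRhs, sub_eq_zero, ← mul_div_assoc, div_eq_iff hD, hinflow]
  constructor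
  · intro h
    field_simp
    linear_combination h
  · rintro rfl
    field_simp

end Sequestration

end

open Sequestration in
theorem stmt11_general (κ0Q κIL κSR κRS κRI C_M C_U : ℝ)
    (hκ0Q : 0 < κ0Q) (hκIL : 0 < κIL) (hκSR : 0 < κSR) (hκRS : 0 < κRS)
    (hκRI : 0 < κRI) (h : κ0Q < κIL) (hCM : 1 < C_M)
    (sInfty uInfty : ℝ) (hs : sInfty = 1 - κ0Q / κIL)
    (hu : uInfty = (κSR / κRS) * (κRI / κ0Q) * (C_M - κ0Q / κIL) * (1 - κ0Q / κIL))
    (hcond : uInfty < C_U) :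
    sInfty ∈ Ioo (0 : ℝ) 1 ∧ uInfty ∈ Ioo 0 C_U ∧
    (κRS * uInfty * ((κIL * (1 - sInfty) + κSR * sInfty)
        / (κRI * (C_M - (1 - sInfty)) + κRS * uInfty)) - κSR * sInfty = 0) ∧
    (κIL * (1 - sInfty) - κ0Q = 0) ∧
    (∀ s u : ℝ, s ∈ Ioo (0 : ℝ) 1 → u ∈ Ioo 0 C_U →
      κRS * u * ((κIL * (1 - s) + κSR * s)
        / (κRI * (C_M - (1 - s)) + κRS * u)) - κSR * s = 0 →
      κIL * (1 - s) - κ0Q = 0 → s = sInfty ∧ u = uInfty) := by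
  have hratio_pos : 0 < κ0Q / κIL := div_pos hκ0Q hκIL
  have hratio_lt : κ0Q / κIL < 1 := (div_lt_one hκIL).2 h
  have hsI : sInfty ∈ Ioo (0 : ℝ) 1 := by rw [hs]; constructor <;> linarith
  have hu' : uInfty = κSR / κRS * (κRI / κ0Q) * (C_M - (1 - sInfty)) * sInfty := by
    rw [hu, hs, sub_sub_cancel]
  have hs0 : 0 < sInfty := hsI.1
  have hCMs : 1 - sInfty < C_M := by linarith
  have huPos : 0 < uInfty := by
    rw [hu']
    have := sub_pos.2 hCMs
    positivity
  have hU : uRhs κ0Q κIL sInfty = 0 := (uRhs_eq_zero_iff hκIL.ne').2 hs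
  have hS (u : ℝ) (hu0 : 0 < u) : sRhs κIL κSR κRS κRI C_M sInfty u = 0 ↔
      u = κSR / κRS * (κRI / κ0Q) * (C_M - (1 - sInfty)) * sInfty :=
    sRhs_eq_zero_iff_of_uRhs_eq_zero hκ0Q.ne' hκRS.ne'
      (sRhs_denom_pos hκRI hκRS.le hCMs hu0.le).ne' hU
  refine ⟨hsI, ⟨huPos, hcond⟩, (hS uInfty huPos).2 hu', hU, ?_⟩
  rintro s u - ⟨hu0, -⟩ hSs hUs
  obtain rfl : s = sInfty := ((uRhs_eq_zero_iff hκIL.ne').1 hUs).trans hs.symm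
  exact ⟨rfl, ((hS u hu0).1 hSs).trans hu'.symm⟩

/-- Optimal sequestration regime (Theorem 4.2): under condition `u∞ < C_U`,
`(s∞, u∞)` lies in `(0,1) × (0, C_U)` and is the unique zero there of the
right-hand sides of the limiting dynamical system. -/
theorem stmt11 (κ0Q κIL κSR κRS κRI C_M C_U : ℝ)
    (hκ0Q : 0 < κ0Q) (hκIL : 0 < κIL) (hκSR : 0 < κSR) (hκRS : 0 < κRS)
    (hκRI : 0 < κRI) (hCU : 0 < C_U) (h : κ0Q < κIL) (hCM : 1 < C_M)
    (sInfty uInfty : ℝ) (hs : sInfty = 1 - κ0Q / κIL)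
    (hu : uInfty = (κSR / κRS) * (κRI / κ0Q) * (C_M - κ0Q / κIL) * (1 - κ0Q / κIL))
    (hcond : uInfty < C_U) :
    sInfty ∈ Ioo (0 : ℝ) 1 ∧ uInfty ∈ Ioo 0 C_U ∧
    (κRS * uInfty * ((κIL * (1 - sInfty) + κSR * sInfty)
        / (κRI * (C_M - (1 - sInfty)) + κRS * uInfty)) - κSR * sInfty = 0) ∧
    (κIL * (1 - sInfty) - κ0Q = 0) ∧
    (∀ s u : ℝ, s ∈ Ioo (0 : ℝ) 1 → u ∈ Ioo 0 C_U →
      κRS * u * ((κIL * (1 - s) + κSR * s)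
        / (κRI * (C_M - (1 - s)) + κRS * u)) - κSR * s = 0 →
      κIL * (1 - s) - κ0Q = 0 → s = sInfty ∧ u = uInfty) :=
  stmt11_general κ0Q κIL κSR κRS κRI C_M C_U hκ0Q hκIL hκSR hκRS hκRI h hCM sInfty uInfty hs hu
    hcond
end

section
/- Let κRI, κSR, κRS, κ0Q, κIL, C_M, C_U > 0 with C_M > 1, κ0Q < κIL, and (C_M − κ0Q/κIL)·(1 − κ0Q/κIL) > C_U·(κ0Q/κRI)·(κRS/κSR). Let s∞ be the positive root of P₁(s) = κRI·κSR·s² + (C_M−1)·κRI·κSR·s − C_U·κ0Q·κRS. Then 0 < s∞ < 1 − κ0Q/κIL < 1, and consequently ℓ∞ = 1 − κ0Q/κIL − s∞ satisfies ℓ∞ ∈ (0,1). -/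
open Set

/-- The quadratic `P₁` of the saturation regime. -/
noncomputable def P1 (κRI κSR κRS κ0Q C_M C_U : ℝ) (s : ℝ) : ℝ :=
  κRI * κSR * s ^ 2 + (C_M - 1) * κRI * κSR * s - C_U * κ0Q * κRS

/-- Under the saturation condition, the positive root `s∞` of `P₁` satisfies
`0 < s∞ < 1 − κ0Q/κIL < 1`, hence `ℓ∞ = 1 − κ0Q/κIL − s∞ ∈ (0,1)`. -/
theorem stmt14 (κRI κSR κRS κ0Q κIL C_M C_U : ℝ)
    (hκRI : 0 < κRI) (hκSR : 0 < κSR) (hκRS : 0 < κRS) (hκ0Q : 0 < κ0Q)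
    (hκIL : 0 < κIL) (hCM : 1 < C_M) (hCU : 0 < C_U) (h : κ0Q < κIL)
    (hcond : (C_M - κ0Q / κIL) * (1 - κ0Q / κIL)
        > C_U * (κ0Q / κRI) * (κRS / κSR))
    (sInfty : ℝ) (hpos : 0 < sInfty)
    (hroot : P1 κRI κSR κRS κ0Q C_M C_U sInfty = 0) :
    0 < sInfty ∧ sInfty < 1 - κ0Q / κIL ∧ 1 - κ0Q / κIL < 1 ∧
      (1 - κ0Q / κIL - sInfty) ∈ Ioo (0 : ℝ) 1 := by
  unfold P1 at hroot
  set q : ℝ := κ0Q / κIL with hqdef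
  have hq0 : 0 < q := div_pos hκ0Q hκIL
  have hq1 : q < 1 := (div_lt_one hκIL).mpr h
  have hx : 0 < 1 - q := by linarith
  -- P1 at 1 - q is positive
  have hP : 0 < κRI * κSR * (1 - q) ^ 2 + (C_M - 1) * κRI * κSR * (1 - q)
      - C_U * κ0Q * κRS := by
    have h1 : C_U * (κ0Q / κRI) * (κRS / κSR) * (κRI * κSR)
        = C_U * κ0Q * κRS := by
      field_simp
    nlinarith [mul_lt_mul_of_pos_right hcond (mul_pos hκRI hκSR)]
  have hlt : sInfty < 1 - q := by
    by_contra hle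
    push_neg at hle
    have key : 0 ≤ (sInfty - (1 - q)) *
        (κRI * κSR * (sInfty + (1 - q)) + (C_M - 1) * κRI * κSR) := by
      apply mul_nonneg (by linarith)
      nlinarith [mul_pos hκRI hκSR]
    nlinarith
  refine ⟨hpos, hlt, by linarith, ?_⟩
  simp only [mem_Ioo]
  exact ⟨by linarith, by linarith⟩
end
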